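/- Conditional-probability swap identity: Let s, s̃ ∈ S^N with s̃ = σ(s) for a permutation σ fixing i (σ(i) = i). Suppose joint actions satisfy P(u_t = σ(a) | x_t = σ(s), u^i_t = a^i) = P(u_t = a | x_t = s, u^i_t = a^i) for all a, and the state transition is product-form with empirical-measure dependence as above. Then for any s' ∈ S^N, P(x_{t+1} = σ(s') | x_t = s̃, u^i_t = a^i) = P(x_{t+1} = s' | x_t = s, u^i_t = a^i); consequently, for any set W ⊆ S^N closed under permutations fixing no constraint beyond empirical-measure and i-th coordinate equality (i.e., W = φ^{−1}(w) for φ(s) = (s^i, μ(·|s))), P(x_{t+1} ∈ W | x_t = s, u^i_t = a^i) = P(x_{t+1} ∈ W | x_t = s̃, u^i_t = a^i). -/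

import Mathlib

/-!
Relabelling the agents by a permutation `σ` that fixes `i` changes neither the empirical
measure of a state nor the action of agent `i`. Hence substituting `a ↦ a ∘ σ` in the sum over
joint actions defining `condNext`, and using the `σ`-invariance of the action law, carries the
transition probability from `s` to `s'` onto the one from `s ∘ σ` to `s' ∘ σ`. The fibres of
`s ↦ (s i, empDist s)` are stable under `s' ↦ s' ∘ σ`, so the identity survives summation
over a fibre.
-/

open Classical

noncomputable section

/-- The empirical measure (as a probability vector) of a global state `s ∈ S^N`. -/
def empDist {S : Type} [DecidableEq S] {N : ℕ} (s : Fin N → S) : S → ℝ :=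
  fun x => ((Finset.univ.filter fun j : Fin N => s j = x).card : ℝ) / (N : ℝ)

/-- Conditional probability `P(x_{t+1} = s' | x_t = s, u^i_t = ai)` obtained by averaging the
product-form transition law over the joint action, whose conditional probability given
`(x_t = s, u^i_t = ai)` is `A s a` supported on `{a : a i = ai}`. -/
def condNext {S U : Type} [Fintype U] [DecidableEq S] [DecidableEq U] {N : ℕ}
    (Ploc : S → (S → ℝ) → U → S → ℝ)
    (A : (Fin N → S) → (Fin N → U) → ℝ)
    (i : Fin N) (ai : U) (s s' : Fin N → S) : ℝ :=
  ∑ a : Fin N → U,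
    if a i = ai then A s a * ∏ j : Fin N, Ploc (s j) (empDist s) (a j) (s' j) else 0

open Finset

section

variable {S U : Type} {N : ℕ}

theorem empDist_comp_perm [DecidableEq S] (σ : Equiv.Perm (Fin N)) (s : Fin N → S) :
    empDist (fun j => s (σ j)) = empDist s := by
  funext x
  simp only [empDist, card_filter]
  rw [Equiv.sum_comp σ (fun j => if s j = x then 1 else 0)]

theorem condNext_comp_perm [Fintype U] [DecidableEq S] [DecidableEq U]
    (Ploc : S → (S → ℝ) → U → S → ℝ) (A : (Fin N → S) → (Fin N → U) → ℝ)
    {i : Fin N} (ai : U) {σ : Equiv.Perm (Fin N)} (hσi : σ i = i) {s : Fin N → S}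
    (hA : ∀ a : Fin N → U, A (fun j => s (σ j)) (fun j => a (σ j)) = A s a)
    (s' : Fin N → S) :
    condNext Ploc A i ai (fun j => s (σ j)) (fun j => s' (σ j)) = condNext Ploc A i ai s s' := by
  unfold condNext
  rw [empDist_comp_perm]
  refine (Fintype.sum_equiv (σ.symm.arrowCongr (Equiv.refl U)) _ _ fun a => ?_).symm
  simp [Equiv.arrowCongr, Function.comp_def, hσi, hA,
    Equiv.prod_comp σ fun j => Ploc (s j) (empDist s) (a j) (s' j)]

theorem sum_fiber_comp_perm [Fintype S] [DecidableEq S] {M : Type} [AddCommMonoid M]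
    {i : Fin N} {σ : Equiv.Perm (Fin N)} (hσi : σ i = i) (w : S × (S → ℝ))
    {f g : (Fin N → S) → M} (hfg : ∀ s', g (fun j => s' (σ j)) = f s') :
    ∑ s' ∈ univ.filter (fun s' : Fin N → S => s' i = w.1 ∧ empDist s' = w.2), g s'
      = ∑ s' ∈ univ.filter (fun s' : Fin N → S => s' i = w.1 ∧ empDist s' = w.2), f s' := by
  refine (sum_equiv (σ.symm.arrowCongr (Equiv.refl S)) (fun t => ?_)
    fun t _ => (hfg t).symm).symm
  simp [Equiv.arrowCongr, Function.comp_def, hσi, empDist_comp_perm]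

end

/-- Conditional-probability swap identity: for a permutation `σ` fixing player `i`, if the joint
action law is `σ`-symmetric, then
`P(x_{t+1} = σ(s') | x_t = σ(s), u^i_t = ai) = P(x_{t+1} = s' | x_t = s, u^i_t = ai)`;
consequently the conditional probability of landing in `φ⁻¹(w)`, where `φ(s) = (s^i, μ(·|s))`,
is the same from `s` and from `σ(s)`. -/
theorem conditional_probability_swap
    {S U : Type} [Fintype S] [Fintype U] [DecidableEq S] [DecidableEq U] {N : ℕ}
    (i : Fin N) (σ : Equiv.Perm (Fin N)) (hσi : σ i = i)
    (Ploc : S → (S → ℝ) → U → S → ℝ)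
    (A : (Fin N → S) → (Fin N → U) → ℝ)
    (hA : ∀ (s : Fin N → S) (a : Fin N → U),
      A (fun j => s (σ j)) (fun j => a (σ j)) = A s a)
    (s : Fin N → S) (ai : U) :
    (∀ s' : Fin N → S,
      condNext Ploc A i ai (fun j => s (σ j)) (fun j => s' (σ j))
        = condNext Ploc A i ai s s') ∧
    (∀ w : S × (S → ℝ),
      (∑ s' ∈ Finset.univ.filter
          (fun s' : Fin N → S => s' i = w.1 ∧ empDist s' = w.2),
        condNext Ploc A i ai (fun j => s (σ j)) s')
      = ∑ s' ∈ Finset.univ.filter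
          (fun s' : Fin N → S => s' i = w.1 ∧ empDist s' = w.2),
        condNext Ploc A i ai s s') := by
  have hswap := condNext_comp_perm Ploc A ai hσi (hA s)
  exact ⟨hswap, fun w => sum_fiber_comp_perm hσi w hswap⟩

end
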